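/- arXiv:2503.08169 — 6 statements merged into one kernel-verified Lean document; each statement's English description precedes it below -/
import Mathlib

section
/- For integers n ≥ m+1 ≥ 1 and any continuously differentiable function f on [-1,1], we have ∫_{-1}^{1} f'(x) T_n^{(m+1)}(x) (1-x^2)^{m+1/2} dx = (n^2 - m^2) ∫_{-1}^{1} f(x) T_n^{(m)}(x) (1-x^2)^{m-1/2} dx. -/
/-!
The weight `(1 - x²)^(m + 1/2)` turns the Chebyshev equation differentiated `m` times,
`(1 - x²) T_n^{(m+2)} = (2m + 1) x T_n^{(m+1)} - (n² - m²) T_n^{(m)}`, into the Sturm–Liouville form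
`((1 - x²)^(m + 1/2) T_n^{(m+1)})' = -(n² - m²) (1 - x²)^(m - 1/2) T_n^{(m)}`.
Integrating by parts against `f`, the boundary terms vanish because the weight is zero at `±1`,
and the singularity of `(1 - x²)^(m - 1/2)` at `±1` is integrable.
-/

open Polynomial Polynomial.Chebyshev intervalIntegral

open MeasureTheory Set
open scoped Interval

theorem intervalIntegrable_one_sub_sq_rpow {r : ℝ} (hr : -1 < r) :
    IntervalIntegrable (fun x : ℝ => (1 - x ^ 2) ^ r) volume (-1) 1 := by
  have h01 : IntervalIntegrable (fun x : ℝ => (1 - x ^ 2) ^ r) volume 0 1 := by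
    have hsing : IntervalIntegrable (fun x : ℝ => (1 - x) ^ r) volume 0 1 := by
      simpa using ((intervalIntegrable_rpow' hr (a := 0) (b := 1)).comp_sub_left 1).symm
    have hreg : ContinuousOn (fun x : ℝ => (1 + x) ^ r) [[0, 1]] := by
      refine ContinuousOn.rpow_const (by fun_prop) fun x hx => Or.inl ?_
      rw [uIcc_of_le zero_le_one] at hx
      linarith [hx.1]
    refine (hsing.continuousOn_mul hreg).congr fun x hx => ?_
    rw [uIoc_of_le zero_le_one] at hx
    rw [← Real.mul_rpow (by linarith [hx.1]) (by linarith [hx.2])]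
    ring_nf
  have h10 : IntervalIntegrable (fun x : ℝ => (1 - x ^ 2) ^ r) volume (-1) 0 := by
    simpa [neg_sq] using (h01.comp_sub_left 0).symm
  exact h10.trans h01

theorem hasDerivAt_iterate_derivative_T_mul_one_sub_sq_rpow (n : ℤ) (m : ℕ) {x : ℝ}
    (hx : x ∈ Ioo (-1 : ℝ) 1) :
    HasDerivAt (fun y => (derivative^[m + 1] (T ℝ n)).eval y * (1 - y ^ 2) ^ ((m : ℝ) + 1/2))
      (-((n : ℝ) ^ 2 - (m : ℝ) ^ 2) * (derivative^[m] (T ℝ n)).eval x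
        * (1 - x ^ 2) ^ ((m : ℝ) - 1/2)) x := by
  have hpos : 0 < 1 - x ^ 2 := by nlinarith [hx.1, hx.2]
  have hweight : HasDerivAt (fun y : ℝ => (1 - y ^ 2) ^ ((m : ℝ) + 1/2))
      (((m : ℝ) + 1/2) * (1 - x ^ 2) ^ ((m : ℝ) - 1/2) * -(2 * x)) x := by
    convert ((hasDerivAt_pow 2 x).const_sub 1).rpow_const (p := (m : ℝ) + 1/2)
      (Or.inl hpos.ne') using 1
    ring_nf
  have hpoly := (derivative^[m + 1] (T ℝ n)).hasDerivAt x
  rw [← Function.iterate_succ_apply' derivative] at hpoly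
  refine (hpoly.mul hweight).congr_deriv ?_
  have hsplit : (1 - x ^ 2) ^ ((m : ℝ) + 1/2) = (1 - x ^ 2) * (1 - x ^ 2) ^ ((m : ℝ) - 1/2) := by
    rw [show (m : ℝ) + 1/2 = 1 + ((m : ℝ) - 1/2) by ring, Real.rpow_add hpos, Real.rpow_one]
  rw [hsplit]
  linear_combination
    (1 - x ^ 2) ^ ((m : ℝ) - 1/2) * one_sub_X_sq_mul_iterate_derivative_T_eval n m x

theorem integral_deriv_mul_iterate_derivative_T_mul_rpow (n : ℤ) (m : ℕ) {f f' : ℝ → ℝ}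
    (hf : ContinuousOn f [[-1, 1]]) (hff' : ∀ x ∈ Ioo (-1 : ℝ) 1, HasDerivAt f (f' x) x)
    (hf' : IntervalIntegrable f' volume (-1) 1) :
    ∫ x in (-1 : ℝ)..1,
        f' x * (derivative^[m + 1] (T ℝ n)).eval x * (1 - x ^ 2) ^ ((m : ℝ) + 1/2)
      = ((n : ℝ) ^ 2 - (m : ℝ) ^ 2) * ∫ x in (-1 : ℝ)..1,
        f x * (derivative^[m] (T ℝ n)).eval x * (1 - x ^ 2) ^ ((m : ℝ) - 1/2) := by
  set g : ℝ → ℝ := fun y => (derivative^[m + 1] (T ℝ n)).eval y * (1 - y ^ 2) ^ ((m : ℝ) + 1/2)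
  set g' : ℝ → ℝ := fun y => -((n : ℝ) ^ 2 - (m : ℝ) ^ 2) * (derivative^[m] (T ℝ n)).eval y
        * (1 - y ^ 2) ^ ((m : ℝ) - 1/2)
  have hg : Continuous g := by
    refine (Polynomial.continuous _).mul (Continuous.rpow_const (by fun_prop) fun _ => Or.inr ?_)
    positivity
  have hg' : IntervalIntegrable g' volume (-1) 1 := by
    have hr : -1 < (m : ℝ) - 1/2 := by linarith [(m.cast_nonneg : (0 : ℝ) ≤ m)]
    exact (intervalIntegrable_one_sub_sq_rpow hr).continuousOn_mul (by fun_prop)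
  have hg_boundary : ∀ x : ℝ, x ^ 2 = 1 → g x = 0 := fun x hx => by
    simp only [g, hx, sub_self, Real.zero_rpow (by positivity : (m : ℝ) + 1/2 ≠ 0), mul_zero]
  have hparts := integral_mul_deriv_eq_deriv_mul_of_hasDerivAt hf hg.continuousOn
    (by simpa using hff')
    (fun x hx => hasDerivAt_iterate_derivative_T_mul_one_sub_sq_rpow n m (by simpa using hx))
    hf' hg'
  rw [hg_boundary 1 (by norm_num), hg_boundary (-1) (by norm_num)] at hparts
  rw [mul_zero, mul_zero, sub_zero, zero_sub] at hparts
  calc _ = ∫ x in (-1 : ℝ)..1, f' x * g x := by simp only [g, mul_assoc]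
    _ = -∫ x in (-1 : ℝ)..1, f x * g' x := by rw [hparts, neg_neg]
    _ = _ := by
      rw [← intervalIntegral.integral_neg, ← intervalIntegral.integral_const_mul]
      congr with x
      ring

theorem stmt_0_general (n m : ℕ) (f : ℝ → ℝ) (hf : ContDiff ℝ 1 f) :
    ∫ x in (-1:ℝ)..1,
        deriv f x * ((derivative^[m+1] (T ℝ n)).eval x) * (1 - x ^ 2) ^ ((m : ℝ) + 1/2)
      = ((n : ℝ) ^ 2 - (m : ℝ) ^ 2) *
        ∫ x in (-1:ℝ)..1,
          f x * ((derivative^[m] (T ℝ n)).eval x) * (1 - x ^ 2) ^ ((m : ℝ) - 1/2) := by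
  have h := integral_deriv_mul_iterate_derivative_T_mul_rpow n m hf.continuous.continuousOn
    (fun x _ => (hf.differentiable one_ne_zero x).hasDerivAt)
    ((hf.continuous_deriv le_rfl).intervalIntegrable _ _)
  simpa only [Int.cast_natCast] using h

theorem stmt_0 (n m : ℕ) (hnm : m + 1 ≤ n) (f : ℝ → ℝ) (hf : ContDiff ℝ 1 f) :
    ∫ x in (-1:ℝ)..1,
        deriv f x * ((derivative^[m+1] (T ℝ n)).eval x) * (1 - x ^ 2) ^ ((m : ℝ) + 1/2)
      = ((n : ℝ) ^ 2 - (m : ℝ) ^ 2) *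
        ∫ x in (-1:ℝ)..1,
          f x * ((derivative^[m] (T ℝ n)).eval x) * (1 - x ^ 2) ^ ((m : ℝ) - 1/2) :=
  stmt_0_general n m f hf
end

section
/- For all real x in [-1,1] and natural numbers m ≥ 1, n ≥ m, the identity ((1-x^2)^{m+1/2} T_n^{(m+1)}(x))' = -(n^2 - m^2)(1-x^2)^{m-1/2} T_n^{(m)}(x) holds. -/
open Polynomial Polynomial.Chebyshev

/-
Differentiating the product gives `(1 - x²)^(m - 1/2)` times
`(1 - x²) T_n^{(m+2)} - (2m + 1) x T_n^{(m+1)}`, and the `m`-times differentiated Chebyshev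
equation `(1 - x²) T_n^{(m+2)} = (2m + 1) x T_n^{(m+1)} - (n² - m²) T_n^{(m)}` turns this into the
right-hand side. Since `m + 1/2 ≥ 1`, the real power is differentiable even where `1 - x² = 0`.
-/

theorem Real.rpow_sub_one_mul_self (a : ℝ) {s : ℝ} (hs : s ≠ 0) : a ^ (s - 1) * a = a ^ s := by
  rcases eq_or_ne a 0 with rfl | ha
  · rw [mul_zero, Real.zero_rpow hs]
  · rw [Real.rpow_sub_one ha, div_mul_cancel₀ _ ha]

theorem stmt_2_general (n m : ℕ) (hm : 1 ≤ m) (x : ℝ) :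
    HasDerivAt
      (fun y : ℝ => (1 - y ^ 2) ^ ((m : ℝ) + 1/2) * ((derivative^[m+1] (T ℝ n)).eval y))
      (-((n : ℝ) ^ 2 - (m : ℝ) ^ 2) * (1 - x ^ 2) ^ ((m : ℝ) - 1/2)
        * ((derivative^[m] (T ℝ n)).eval x)) x := by
  have hm' : (1 : ℝ) ≤ m + 1/2 := by
    have : (1 : ℝ) ≤ m := Nat.one_le_cast.mpr hm
    linarith
  have hpow : HasDerivAt (fun y : ℝ => (1 - y ^ 2) ^ ((m : ℝ) + 1/2))
      (-(2 * x) * ((m : ℝ) + 1/2) * (1 - x ^ 2) ^ ((m : ℝ) - 1/2)) x := by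
    have := ((hasDerivAt_pow 2 x).const_sub 1).rpow_const (p := (m : ℝ) + 1/2) (Or.inr hm')
    convert this using 3 <;> ring
  have hpoly := (derivative^[m + 1] (T ℝ n)).hasDerivAt x
  rw [← Function.iterate_succ_apply' derivative] at hpoly
  have hode := one_sub_X_sq_mul_iterate_derivative_T_eval (n : ℤ) m x
  have hsplit : (1 - x ^ 2) ^ ((m : ℝ) + 1/2) = (1 - x ^ 2) ^ ((m : ℝ) - 1/2) * (1 - x ^ 2) := by
    rw [← Real.rpow_sub_one_mul_self _ (by linarith : (m : ℝ) + 1/2 ≠ 0)]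
    ring_nf
  refine (hpow.mul hpoly).congr_deriv ?_
  rw [hsplit]
  push_cast at hode
  linear_combination (1 - x ^ 2) ^ ((m : ℝ) - 1/2) * hode

theorem stmt_2 (n m : ℕ) (hm : 1 ≤ m) (hn : m ≤ n) (x : ℝ) (hx : x ∈ Set.Icc (-1:ℝ) 1) :
    HasDerivAt
      (fun y : ℝ => (1 - y ^ 2) ^ ((m : ℝ) + 1/2) * ((derivative^[m+1] (T ℝ n)).eval y))
      (-((n : ℝ) ^ 2 - (m : ℝ) ^ 2) * (1 - x ^ 2) ^ ((m : ℝ) - 1/2)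
        * ((derivative^[m] (T ℝ n)).eval x)) x :=
  stmt_2_general n m hm x
end

section
/- For every integer j ≥ 2 and every x ∈ [-1,1], |(1-x^2)^{1/2} T_j''(x)| ≤ (1/2) j^3. -/
open Polynomial Polynomial.Chebyshev

private lemma one_sub_X_sq_ne_zero : (1 - X ^ 2 : ℝ[X]) ≠ 0 := by
  intro h
  have := congrArg (Polynomial.eval 0) h
  simp at this

/-- Key identity: U_{n+2}' = U_n' + 2(n+2) U_{n+1}. -/
private lemma derivative_U_add_two (n : ℤ) :
    derivative (U ℝ (n + 2)) = derivative (U ℝ n) + 2 * ((n : ℝ[X]) + 2) * U ℝ (n + 1) := by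
  apply mul_left_cancel₀ one_sub_X_sq_ne_zero
  have e1 := add_one_mul_T_eq_poly_in_U (R := ℝ) n
  have e2 := add_one_mul_T_eq_poly_in_U (R := ℝ) (n + 2)
  have e3 := one_sub_X_sq_mul_U_eq_pol_in_T ℝ (n + 1)
  have e4 := T_add_two ℝ (n + 1)
  have e5 := U_add_two ℝ n
  have e6 := U_eq_X_mul_U_add_T ℝ (n + 1)
  push_cast at e2
  linear_combination (norm := ring_nf) e2 - e1 - (2 * (n : ℝ[X]) + 4) * e3
    + ((n : ℝ[X]) + 1) * e4 - X * e5 + 2 * X * e6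

/-- |√(1-x²) U_n(x)| ≤ 1 on [-1,1]. -/
private lemma abs_sqrt_mul_U_le (n : ℤ) {x : ℝ} (hx : x ∈ Set.Icc (-1:ℝ) 1) :
    |Real.sqrt (1 - x ^ 2) * (U ℝ n).eval x| ≤ 1 := by
  obtain ⟨h1, h2⟩ := hx
  have hc : Real.cos (Real.arccos x) = x := Real.cos_arccos h1 h2
  have hs : Real.sin (Real.arccos x) = Real.sqrt (1 - x ^ 2) := Real.sin_arccos x
  have := U_real_cos (Real.arccos x) n
  rw [hc, hs] at this
  rw [mul_comm, this]
  exact Real.abs_sin_le_one _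

private lemma sqrt_one_sub_sq_le_one {x : ℝ} : Real.sqrt (1 - x ^ 2) ≤ 1 := by
  rw [Real.sqrt_le_one]
  nlinarith [sq_nonneg x]

/-- |√(1-x²) U_n'(x)| ≤ (n+1)²/2 on [-1,1]. -/
private lemma abs_sqrt_mul_derivU_le (n : ℕ) {x : ℝ} (hx : x ∈ Set.Icc (-1:ℝ) 1) :
    |Real.sqrt (1 - x ^ 2) * (derivative (U ℝ (n : ℤ))).eval x| ≤ ((n : ℝ) + 1) ^ 2 / 2 := by
  induction n using Nat.twoStepInduction with
  | zero => norm_num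
  | one =>
    have h1 : (((1:ℕ):ℤ)) = 1 := by norm_num
    have h : (derivative (U ℝ ((1:ℕ) : ℤ))).eval x = 2 := by
      rw [h1, U_one, derivative_mul]
      simp
    rw [h, abs_mul]
    have hle : |Real.sqrt (1 - x ^ 2)| ≤ 1 := by
      rw [abs_of_nonneg (Real.sqrt_nonneg _)]
      exact sqrt_one_sub_sq_le_one
    have h2 : |(2:ℝ)| = 2 := by norm_num
    rw [h2]
    push_cast
    nlinarith [abs_nonneg (Real.sqrt (1 - x^2))]
  | more n ih _ =>
    have hcast : ((n + 2 : ℕ) : ℤ) = (n : ℤ) + 2 := by push_cast; ring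
    rw [hcast, derivative_U_add_two (n : ℤ)]
    have hU := abs_sqrt_mul_U_le ((n : ℤ) + 1) hx
    have e : Polynomial.eval x (derivative (U ℝ (n:ℤ)) + 2 * (((n:ℤ) : ℝ[X]) + 2) * U ℝ ((n:ℤ) + 1))
        = (derivative (U ℝ (n:ℤ))).eval x + 2 * ((n : ℝ) + 2) * (U ℝ ((n:ℤ) + 1)).eval x := by
      simp
    rw [e, mul_add]
    refine (abs_add_le _ _).trans ?_
    have h2 : |Real.sqrt (1 - x ^ 2) * (2 * ((n : ℝ) + 2) * (U ℝ ((n:ℤ) + 1)).eval x)|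
        = 2 * ((n : ℝ) + 2) * |Real.sqrt (1 - x ^ 2) * (U ℝ ((n:ℤ) + 1)).eval x| := by
      rw [show Real.sqrt (1 - x ^ 2) * (2 * ((n : ℝ) + 2) * (U ℝ ((n:ℤ) + 1)).eval x)
          = 2 * ((n : ℝ) + 2) * (Real.sqrt (1 - x ^ 2) * (U ℝ ((n:ℤ) + 1)).eval x) by ring,
        abs_mul, abs_of_nonneg (by positivity : (0:ℝ) ≤ 2 * ((n : ℝ) + 2))]
    rw [h2]
    push_cast
    nlinarith [hU, ih]

theorem stmt_5 (j : ℕ) (hj : 2 ≤ j) (x : ℝ) (hx : x ∈ Set.Icc (-1:ℝ) 1) :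
    |Real.sqrt (1 - x ^ 2) * ((derivative (derivative (T ℝ j))).eval x)|
      ≤ (1/2) * (j : ℝ) ^ 3 := by
  have hT : derivative (derivative (T ℝ (j : ℤ)))
      = ((j : ℤ) : ℝ[X]) * derivative (U ℝ ((j:ℤ) - 1)) := by
    rw [T_derivative_eq_U, derivative_intCast_mul]
  have hj1 : ((j : ℤ) - 1) = ((j - 1 : ℕ) : ℤ) := by omega
  have hD := abs_sqrt_mul_derivU_le (j - 1) hx
  rw [hT, hj1]
  have e : Polynomial.eval x (((j : ℤ) : ℝ[X]) * derivative (U ℝ ((j - 1 : ℕ) : ℤ)))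
      = (j : ℝ) * (derivative (U ℝ ((j - 1 : ℕ) : ℤ))).eval x := by
    simp
  rw [e, show Real.sqrt (1 - x ^ 2) * ((j : ℝ) * (derivative (U ℝ ((j - 1 : ℕ) : ℤ))).eval x)
      = (j : ℝ) * (Real.sqrt (1 - x ^ 2) * (derivative (U ℝ ((j - 1 : ℕ) : ℤ))).eval x) by ring,
    abs_mul, abs_of_nonneg (by positivity : (0:ℝ) ≤ (j:ℝ))]
  have hcast : ((j - 1 : ℕ) : ℝ) + 1 = (j : ℝ) := by
    have h1 : 1 ≤ j := by omega
    have : ((j - 1 : ℕ) : ℝ) = (j : ℝ) - 1 := by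
      push_cast [h1]
      ring
    rw [this]; ring
  rw [hcast] at hD
  have hjpos : (0:ℝ) ≤ (j : ℝ) := by positivity
  nlinarith [hD, abs_nonneg (Real.sqrt (1 - x ^ 2)
    * (derivative (U ℝ ((j - 1 : ℕ) : ℤ))).eval x)]
end

section
/- For every integer n ≥ 0, ∫_0^π (sin((n+1)θ)/sin θ)^2 sin θ dθ = 2 Σ_{j=0}^{n} 1/(2j+1). -/
/-! The identity `sin² ((k + 1) θ) - sin² (k θ) = sin ((2k + 1) θ) sin θ` telescopes to
`sin² ((n + 1) θ) = sin θ · ∑_{j ≤ n} sin ((2j + 1) θ)`, so the integrand is the odd-harmonic sum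
`∑_{j ≤ n} sin ((2j + 1) θ)`, and each term integrates over `[0, π]` to `2 / (2j + 1)`. -/

open Real Finset intervalIntegral

lemma sin_add_sq_sub_sin_sq (a θ : ℝ) :
    sin (a + θ) ^ 2 - sin a ^ 2 = sin (2 * a + θ) * sin θ := by
  rw [two_mul, add_assoc, sin_add a (a + θ), sin_add a θ, cos_add a θ]
  linear_combination sin a ^ 2 * sin_sq_add_cos_sq θ

lemma sin_nat_mul_sq_eq_sin_mul_sum (n : ℕ) (θ : ℝ) :
    sin (n * θ) ^ 2 = sin θ * ∑ j ∈ range n, sin ((2 * j + 1) * θ) := by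
  have h : ∑ j ∈ range n, (sin ((j + 1 : ℕ) * θ) ^ 2 - sin (j * θ) ^ 2) = sin (n * θ) ^ 2 :=
    (sum_range_sub (fun j : ℕ => sin (j * θ) ^ 2) n).trans (by simp)
  rw [← h, mul_sum]
  refine sum_congr rfl fun j _ => ?_
  rw [Nat.cast_succ, add_one_mul, sin_add_sq_sub_sin_sq, mul_comm, ← mul_assoc, add_one_mul]

lemma sin_nat_mul_eq_zero_of_sin_eq_zero {θ : ℝ} (h : sin θ = 0) (m : ℕ) :
    sin (m * θ) = 0 := by
  obtain ⟨k, rfl⟩ := sin_eq_zero_iff.mp h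
  rw [← mul_assoc, ← Int.cast_natCast, ← Int.cast_mul, sin_int_mul_pi]

lemma sin_div_sin_sq_mul_sin_eq_sum (n : ℕ) (θ : ℝ) :
    (sin ((n + 1) * θ) / sin θ) ^ 2 * sin θ = ∑ j ∈ range (n + 1), sin ((2 * j + 1) * θ) := by
  by_cases hs : sin θ = 0
  -- the left side vanishes by the convention `x / 0 = 0`
  · rw [hs, mul_zero, eq_comm]
    exact sum_eq_zero fun j _ => by exact_mod_cast sin_nat_mul_eq_zero_of_sin_eq_zero hs (2 * j + 1)
  · have h := sin_nat_mul_sq_eq_sin_mul_sum (n + 1) θ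
    push_cast at h
    rw [div_pow, h, sq, mul_div_mul_left _ _ hs, div_mul_cancel₀ _ hs]

lemma integral_sin_odd_mul (j : ℕ) :
    ∫ θ in (0:ℝ)..π, sin ((2 * j + 1) * θ) = 2 / (2 * j + 1) := by
  have hc : (2 * j + 1 : ℝ) ≠ 0 := by positivity
  have hcos : cos ((2 * j + 1) * π) = -1 := by
    exact_mod_cast (cos_nat_mul_pi (2 * j + 1)).trans (Odd.neg_one_pow (odd_two_mul_add_one j))
  rw [integral_comp_mul_left sin hc, integral_sin, mul_zero, cos_zero, hcos,
    smul_eq_mul, sub_neg_eq_add, one_add_one_eq_two, inv_mul_eq_div]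

theorem stmt_11 (n : ℕ) :
    ∫ θ in (0:ℝ)..Real.pi,
        (Real.sin (((n : ℝ) + 1) * θ) / Real.sin θ) ^ 2 * Real.sin θ
      = 2 * ∑ j ∈ Finset.range (n + 1), 1 / (2 * (j : ℝ) + 1) := by
  rw [integral_congr fun θ _ => sin_div_sin_sq_mul_sin_eq_sum n θ,
    integral_finsetSum fun j _ => (by fun_prop : Continuous _).intervalIntegrable _ _, mul_sum]
  refine sum_congr rfl fun j _ => ?_
  rw [integral_sin_odd_mul]
  ring
end

section
/- Let z ∈ ℂ with Re z ≤ 0 and Re z ≠ 0, and define ρ_n(z) = ∫_0^2 U_n(s-1) e^{zs} ds, where U_n is the Chebyshev polynomial of the second kind. Then |ρ_n(z)| ≤ min{ 2, (2|Re z|)^{-1/2} (log(n+1) + 2)^{1/2} }. -/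
/-!
Bound `‖ρ_n(z)‖` by `∫₀² e^{s Re z} |U_n(s - 1)| ds`. As `e^{s Re z} ≤ 1`, this is at most
`∫₋₁¹ |U_n| = ∫₀^π |sin ((n + 1) θ)| dθ = 2` (substitute `x = cos θ`). By Cauchy–Schwarz it is
also at most `(∫₀² e^{2 s Re z} ds)^{1/2} (∫₋₁¹ U_n²)^{1/2}`. The first factor is at most
`(2 |Re z|)^{-1/2}`; for the second, `U_n² = ∑_{k ≤ n} U_{2k}` and `∫₋₁¹ U_{2k} = 2 / (2k + 1)`,
which is at most `log (k + 1) - log k` for `k ≥ 1`, so `∫₋₁¹ U_n² ≤ 2 + log (n + 1)`.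
-/

open Polynomial Polynomial.Chebyshev

open Real intervalIntegral

theorem sin_mul_sum_sin_odd_mul (θ : ℝ) (n : ℕ) :
    sin θ * ∑ k ∈ Finset.range (n + 1), sin ((2 * k + 1) * θ) = sin ((n + 1) * θ) ^ 2 := by
  induction n with
  | zero => simp [sq]
  | succ n ih =>
    rw [Finset.sum_range_succ, mul_add, ih]
    push_cast
    have h1 : ((n : ℝ) + 1 + 1) * θ = (n + 1) * θ + θ := by ring
    have h2 : (2 * ((n : ℝ) + 1) + 1) * θ = 2 * ((n + 1) * θ) + θ := by ring
    rw [h1, h2, sin_add, sin_add, sin_two_mul, cos_two_mul]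
    linear_combination (-(sin ((n + 1) * θ)) ^ 2) * sin_sq_add_cos_sq θ
      + sin θ ^ 2 * sin_sq_add_cos_sq ((n + 1) * θ)

theorem two_div_two_mul_add_one_le_log_sub_log {x : ℝ} (hx : 0 < x) :
    2 / (2 * x + 1) ≤ log (x + 1) - log x := by
  have h := le_hasSum (hasSum_log_one_add_inv hx) 0 fun k _ => by positivity
  calc 2 / (2 * x + 1) = 2 * (1 / (2 * x + 1)) := by ring
    _ ≤ log (1 + x⁻¹) := by simpa using h
    _ = log (x + 1) - log x := by
      rw [← log_div (by positivity) hx.ne']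
      congr 1
      field_simp

theorem sum_range_two_div_two_mul_add_one_le (n : ℕ) :
    ∑ k ∈ Finset.range (n + 1), (2 : ℝ) / (2 * k + 1) ≤ log (n + 1) + 2 := by
  induction n with
  | zero => simp
  | succ n ih =>
    rw [Finset.sum_range_succ]
    have := two_div_two_mul_add_one_le_log_sub_log (n.cast_add_one_pos (α := ℝ))
    push_cast
    linarith

theorem integral_comp_cos_mul_sin {f : ℝ → ℝ} (hf : Continuous f) :
    ∫ θ in (0 : ℝ)..π, f (cos θ) * sin θ = ∫ x in (-1 : ℝ)..1, f x := by
  have h := integral_comp_mul_deriv (a := 0) (b := π) (fun θ _ => hasDerivAt_cos θ)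
    continuous_sin.neg.continuousOn hf
  rw [cos_zero, cos_pi, integral_symm (-1 : ℝ) 1] at h
  simp only [Function.comp_apply, mul_neg, intervalIntegral.integral_neg] at h
  exact neg_inj.1 h

theorem integral_abs_sin_nat_mul {m : ℕ} (hm : m ≠ 0) :
    ∫ θ in (0 : ℝ)..π, |sin (m * θ)| = 2 := by
  have hper : Function.Periodic (fun x => |sin x|) π := fun x => by simp [sin_add_pi]
  have hπ : ∫ x in (0 : ℝ)..π, |sin x| = 2 := by
    rw [integral_congr fun x hx =>
      abs_of_nonneg (sin_nonneg_of_mem_Icc (Set.uIcc_of_le pi_pos.le ▸ hx)), integral_sin]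
    norm_num
  have h := hper.intervalIntegral_add_zsmul_eq m 0
    fun _ _ => (continuous_sin.abs).intervalIntegrable _ _
  rw [zero_add, zero_add, hπ, zsmul_eq_mul, zsmul_eq_mul] at h
  rw [integral_comp_mul_left (fun x => |sin x|) (Nat.cast_ne_zero.2 hm), mul_zero]
  push_cast at h
  rw [h, smul_eq_mul]
  field_simp

theorem integral_exp_mul_le {c : ℝ} (hc : c < 0) (a : ℝ) :
    ∫ s in (0 : ℝ)..a, exp (c * s) ≤ -c⁻¹ := by
  rw [integral_comp_mul_left (fun x => exp x) hc.ne, integral_exp, mul_zero, exp_zero, smul_eq_mul]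
  nlinarith [exp_pos (c * a), inv_lt_zero.2 hc]

theorem integral_mul_le_L2_mul_L2_of_nonneg {f g : ℝ → ℝ} {a b : ℝ} (hab : a ≤ b)
    (hf : Continuous f) (hg : Continuous g) (hf₀ : ∀ x, 0 ≤ f x) (hg₀ : ∀ x, 0 ≤ g x) :
    ∫ x in a..b, f x * g x ≤
      (∫ x in a..b, f x ^ 2) ^ (1 / 2 : ℝ) * (∫ x in a..b, g x ^ 2) ^ (1 / 2 : ℝ) := by
  have memLp_two {h : ℝ → ℝ} (hh : Continuous h) :
      MeasureTheory.MemLp h (ENNReal.ofReal 2) (MeasureTheory.volume.restrict (Set.Ioc a b)) := by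
    rw [ENNReal.ofReal_ofNat, MeasureTheory.memLp_two_iff_integrable_sq hh.aestronglyMeasurable]
    exact (hh.pow 2).integrableOn_Ioc
  simp only [integral_of_le hab]
  simpa only [Real.rpow_two] using MeasureTheory.integral_mul_le_Lp_mul_Lq_of_nonneg
    Real.HolderConjugate.two_two (.of_forall hf₀) (.of_forall hg₀) (memLp_two hf) (memLp_two hg)

theorem integral_zero_two_comp_sub_one (f : ℝ → ℝ) :
    ∫ s in (0 : ℝ)..2, f (s - 1) = ∫ x in (-1 : ℝ)..1, f x := by
  rw [integral_comp_sub_right]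
  norm_num

namespace Polynomial.Chebyshev

theorem U_real_sq_eq_sum_U_even (n : ℕ) :
    U ℝ n ^ 2 = ∑ k ∈ Finset.range (n + 1), U ℝ (2 * k) := by
  -- At `x = cos θ ∈ (-1, 1)`, multiplying by `sin² θ` turns both sides into `sin² ((n + 1) θ)`.
  refine eq_of_infinite_eval_eq _ _ ((Set.Ioo_infinite (by norm_num : (-1 : ℝ) < 1)).mono ?_)
  rintro x ⟨hx₁, hx₂⟩
  obtain ⟨θ, hθ, rfl⟩ : ∃ θ, 0 < sin θ ∧ cos θ = x :=
    ⟨arccos x, sin_arccos x ▸ sqrt_pos.2 (by nlinarith), cos_arccos hx₁.le hx₂.le⟩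
  have hU (m : ℤ) : (U ℝ m).eval (cos θ) * sin θ = sin ((m + 1) * θ) := U_real_cos θ m
  refine mul_right_cancel₀ (pow_ne_zero 2 hθ.ne') ?_
  simp only [eval_pow, eval_finsetSum, Finset.sum_mul]
  rw [← mul_pow, hU, Int.cast_natCast, ← sin_mul_sum_sin_odd_mul, Finset.mul_sum]
  refine Finset.sum_congr rfl fun k _ => ?_
  rw [sq, ← mul_assoc, hU]
  push_cast
  ring

theorem integral_eval_U_two_mul (k : ℕ) :
    ∫ x in (-1 : ℝ)..1, (U ℝ (2 * k)).eval x = 2 / (2 * k + 1) := by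
  have hderiv (x : ℝ) : HasDerivAt (fun y => (T ℝ (2 * k + 1)).eval y / (2 * k + 1))
      ((U ℝ (2 * k)).eval x) x := by
    have h := ((T ℝ (2 * k + 1)).hasDerivAt x).div_const (2 * k + 1 : ℝ)
    rw [T_derivative_eq_U, add_sub_cancel_right, eval_mul, eval_intCast] at h
    refine h.congr_deriv ?_
    push_cast
    field_simp
  rw [integral_eq_sub_of_hasDerivAt (fun x _ => hderiv x)
    ((Polynomial.continuous _).intervalIntegrable _ _), T_eval_one, T_eval_neg_one]
  simp [Int.negOnePow_succ, Int.negOnePow_two_mul]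
  ring

theorem integral_eval_U_sq (n : ℕ) :
    ∫ x in (-1 : ℝ)..1, (U ℝ n).eval x ^ 2 = ∑ k ∈ Finset.range (n + 1), (2 : ℝ) / (2 * k + 1) := by
  simp_rw [← eval_pow, U_real_sq_eq_sum_U_even, eval_finsetSum]
  rw [integral_finsetSum fun k _ => (Polynomial.continuous _).intervalIntegrable _ _]
  exact Finset.sum_congr rfl fun k _ => integral_eval_U_two_mul k

theorem integral_abs_eval_U (n : ℕ) : ∫ x in (-1 : ℝ)..1, |(U ℝ n).eval x| = 2 := by
  rw [← integral_comp_cos_mul_sin (Polynomial.continuous _).abs,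
    ← integral_abs_sin_nat_mul n.succ_ne_zero]
  refine integral_congr fun θ hθ => ?_
  rw [← abs_of_nonneg (sin_nonneg_of_mem_Icc (Set.uIcc_of_le pi_pos.le ▸ hθ)), ← abs_mul,
    U_real_cos]
  push_cast
  rfl

theorem norm_integral_eval_U_mul_exp_le (z : ℂ) (n : ℕ) :
    ‖∫ s in (0 : ℝ)..2, (U ℂ n).eval ((s : ℂ) - 1) * Complex.exp (z * s)‖ ≤
      ∫ s in (0 : ℝ)..2, exp (z.re * s) * |(U ℝ n).eval (s - 1)| := by
  refine (norm_integral_le_integral_norm zero_le_two).trans_eq (integral_congr fun s _ => ?_)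
  rw [norm_mul, Complex.norm_exp, ← Complex.ofReal_one, ← Complex.ofReal_sub,
    ← complex_ofReal_eval_U, Complex.norm_real, Real.norm_eq_abs, mul_comm]
  simp

theorem integral_exp_mul_abs_eval_U_le_two {c : ℝ} (hc : c ≤ 0) (n : ℕ) :
    ∫ s in (0 : ℝ)..2, exp (c * s) * |(U ℝ n).eval (s - 1)| ≤ 2 := by
  have hU : Continuous fun s : ℝ => |(U ℝ n).eval (s - 1)| := by fun_prop
  calc _ ≤ ∫ s in (0 : ℝ)..2, |(U ℝ n).eval (s - 1)| :=
        integral_mono_on zero_le_two ((by fun_prop : Continuous _).intervalIntegrable _ _)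
          (hU.intervalIntegrable _ _) fun s hs => mul_le_of_le_one_left (abs_nonneg _)
            (exp_le_one_iff.2 (mul_nonpos_of_nonpos_of_nonneg hc hs.1))
    _ = 2 := by
      rw [integral_zero_two_comp_sub_one fun x => |(U ℝ n).eval x|, integral_abs_eval_U]

theorem integral_exp_mul_abs_eval_U_le {c : ℝ} (hc : c < 0) (n : ℕ) :
    ∫ s in (0 : ℝ)..2, exp (c * s) * |(U ℝ n).eval (s - 1)| ≤
      (2 * |c|) ^ (-(1 : ℝ) / 2) * (log (n + 1) + 2) ^ ((1 : ℝ) / 2) := by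
  have hexp : ∫ s in (0 : ℝ)..2, exp (c * s) ^ 2 ≤ (2 * |c|)⁻¹ := by
    simp_rw [← exp_nat_mul, Nat.cast_ofNat, ← mul_assoc, abs_of_neg hc, mul_neg, inv_neg]
    exact integral_exp_mul_le (by linarith) 2
  have hU : ∫ s in (0 : ℝ)..2, |(U ℝ n).eval (s - 1)| ^ 2 ≤ log (n + 1) + 2 := by
    simp_rw [sq_abs]
    rw [integral_zero_two_comp_sub_one fun x => (U ℝ n).eval x ^ 2, integral_eval_U_sq]
    exact sum_range_two_div_two_mul_add_one_le n
  have hU₀ : 0 ≤ ∫ s in (0 : ℝ)..2, |(U ℝ n).eval (s - 1)| ^ 2 :=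
    integral_nonneg zero_le_two fun _ _ => by positivity
  have hhalf : (0 : ℝ) ≤ 1 / 2 := by norm_num
  calc _ ≤ (∫ s in (0 : ℝ)..2, exp (c * s) ^ 2) ^ (1 / 2 : ℝ) *
        (∫ s in (0 : ℝ)..2, |(U ℝ n).eval (s - 1)| ^ 2) ^ (1 / 2 : ℝ) :=
        integral_mul_le_L2_mul_L2_of_nonneg zero_le_two (by fun_prop) (by fun_prop)
          (fun _ => (exp_pos _).le) (fun _ => abs_nonneg _)
    _ ≤ ((2 * |c|)⁻¹) ^ (1 / 2 : ℝ) * (log (n + 1) + 2) ^ (1 / 2 : ℝ) :=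
        mul_le_mul (rpow_le_rpow (integral_nonneg zero_le_two fun _ _ => by positivity) hexp hhalf)
          (rpow_le_rpow hU₀ hU hhalf) (rpow_nonneg hU₀ _) (by positivity)
    _ = _ := by rw [neg_div, rpow_neg (by positivity), inv_rpow (by positivity)]

end Polynomial.Chebyshev

theorem stmt_13 (z : ℂ) (hz : z.re ≤ 0) (hz' : z.re ≠ 0) (n : ℕ) :
    ‖∫ s in (0:ℝ)..2, ((U ℂ n).eval ((s : ℂ) - 1)) * Complex.exp (z * s)‖
      ≤ min 2 ((2 * |z.re|) ^ (-(1:ℝ)/2) * (Real.log ((n : ℝ) + 1) + 2) ^ ((1:ℝ)/2)) := by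
  have hρ := norm_integral_eval_U_mul_exp_le z n
  exact le_min (hρ.trans (integral_exp_mul_abs_eval_U_le_two hz n))
    (hρ.trans (integral_exp_mul_abs_eval_U_le (hz.lt_of_ne hz') n))
end

section
/- Let z ∈ ℂ with |z| ≥ 2 and Re z ≤ 0. Then consider the perturbed recurrence ρ̃_{j+1} = ρ̃_{j-1} - ((2j+2)/z) ρ̃_j + γ_j(z) + ε_{j+1} with initial perturbations |ε_0|, |ε_1| ≤ ε and |ε_j| ≤ ε for all j, compared to the exact sequence ρ_j(z) satisfying the same recurrence with ε_j = 0. Then for all n with n + 1 < |z|, |ρ_n(z) - ρ̃_n(z)| < e^{4(n+1)^2/|z|} (⌈n/2⌉ + 1) ε. -/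
/-!
The error `δ_j = ρ_j - ρ̃_j` obeys the homogeneous recurrence perturbed by `e_{j+1}`, so
`|δ_{m+2}| ≤ |δ_m| + ((2m+4)/|z|) |δ_{m+1}| + ε`. This one-step inequality is dominated by
`B_k = exp ((k² + k)/|z|) (⌊(k+1)/2⌋ + 1) ε`: the exponents of `B_{m+2}` and `B_{m+1}` differ by
exactly `(2m+4)/|z|`, and `1 + c ≤ exp c` absorbs the middle term while the counter `⌊(k+1)/2⌋`
grows by one every two steps to absorb `|δ_m|` and `ε`. Finally `k² + k < 4 (k+1)²`.
-/

open Real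

lemma norm_sub_mul_sub_le {R : Type*} [SeminormedRing R] (x a y e : R) :
    ‖x - a * y - e‖ ≤ ‖x‖ + ‖a‖ * ‖y‖ + ‖e‖ := by
  calc ‖x - a * y - e‖ ≤ ‖x - a * y‖ + ‖e‖ := norm_sub_le _ _
    _ ≤ ‖x‖ + ‖a * y‖ + ‖e‖ := by gcongr; exact norm_sub_le _ _
    _ ≤ ‖x‖ + ‖a‖ * ‖y‖ + ‖e‖ := by gcongr; exact norm_mul_le _ _

noncomputable def errorBound (r ε : ℝ) (k : ℕ) : ℝ :=
  exp (((k : ℝ) ^ 2 + k) / r) * (((k + 1) / 2 : ℕ) + 1) * ε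

section errorBound

variable {r ε : ℝ}

lemma errorBound_zero : errorBound r ε 0 = ε := by
  simp [errorBound]

lemma le_errorBound_one (hr : 0 < r) (hε : 0 ≤ ε) : ε ≤ errorBound r ε 1 := by
  have : 1 ≤ exp (((1 : ℝ) ^ 2 + 1) / r) := one_le_exp (by positivity)
  norm_num [errorBound]
  nlinarith

lemma errorBound_step (hr : 0 < r) (hε : 0 ≤ ε) (m : ℕ) :
    errorBound r ε m + (2 * m + 4) / r * errorBound r ε (m + 1) + ε ≤ errorBound r ε (m + 2) := by
  obtain ⟨c, hc_def⟩ : ∃ c : ℝ, c = (2 * m + 4) / r := ⟨_, rfl⟩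
  obtain ⟨a, ha_def⟩ : ∃ a, a = exp ((((m + 1 : ℕ) : ℝ) ^ 2 + (m + 1 : ℕ)) / r) := ⟨_, rfl⟩
  obtain ⟨N, hN_def⟩ : ∃ N : ℝ, N = ((m + 1) / 2 : ℕ) := ⟨_, rfl⟩
  rw [← hc_def]
  have hc : 0 ≤ c := hc_def ▸ by positivity
  have ha : 1 ≤ a := ha_def ▸ one_le_exp (by positivity)
  have hN : 0 ≤ N := hN_def ▸ Nat.cast_nonneg _
  have hBm : errorBound r ε m ≤ a * (N + 1) * ε := by
    rw [errorBound, ← hN_def, ha_def]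
    gcongr exp (?_ / _) * _ * _
    push_cast
    nlinarith
  have hBm1 : errorBound r ε (m + 1) ≤ a * (N + 2) * ε := by
    rw [errorBound, ← ha_def, hN_def]
    gcongr _ * ?_ * _
    exact_mod_cast (by omega : (m + 1 + 1) / 2 + 1 ≤ (m + 1) / 2 + 2)
  -- `(m+2)² + (m+2) = (m+1)² + (m+1) + (2m+4)`, and the counter `⌊(k+1)/2⌋` has gone up by one
  have hBm2 : errorBound r ε (m + 2) = exp c * (a * (N + 2) * ε) := by
    have hN2 : (((m + 2 + 1) / 2 : ℕ) : ℝ) = N + 1 := by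
      rw [hN_def, show (m + 2 + 1) / 2 = (m + 1) / 2 + 1 by omega]; push_cast; rfl
    rw [errorBound, hN2, ← mul_assoc, ← mul_assoc, ha_def, hc_def, ← exp_add]
    congr 2
    · congr 1; field_simp; push_cast; ring
    · ring
  calc errorBound r ε m + c * errorBound r ε (m + 1) + ε
      ≤ a * (N + 1) * ε + c * (a * (N + 2) * ε) + a * ε := by gcongr; nlinarith
    _ = (1 + c) * (a * (N + 2) * ε) := by ring
    _ ≤ exp c * (a * (N + 2) * ε) := by
        gcongr
        linarith [add_one_le_exp c]
    _ = errorBound r ε (m + 2) := hBm2.symm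

lemma le_errorBound_of_recurrence (hr : 0 < r) (hε : 0 ≤ ε) (u : ℕ → ℝ)
    (h0 : u 0 ≤ ε) (h1 : u 1 ≤ ε)
    (hstep : ∀ m : ℕ, u (m + 2) ≤ u m + (2 * m + 4) / r * u (m + 1) + ε) (n : ℕ) :
    u n ≤ errorBound r ε n := by
  induction n using Nat.twoStepInduction with
  | zero => rwa [errorBound_zero]
  | one => exact h1.trans (le_errorBound_one hr hε)
  | more m ihm ihm1 =>
    calc u (m + 2) ≤ u m + (2 * m + 4) / r * u (m + 1) + ε := hstep m
      _ ≤ errorBound r ε m + (2 * m + 4) / r * errorBound r ε (m + 1) + ε := by gcongr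
      _ ≤ errorBound r ε (m + 2) := errorBound_step hr hε m

lemma errorBound_lt (hr : 0 < r) (hε : 0 < ε) (n : ℕ) :
    errorBound r ε n < exp (4 * ((n : ℝ) + 1) ^ 2 / r) * (((n + 1) / 2 : ℕ) + 1) * ε := by
  unfold errorBound
  gcongr
  nlinarith

end errorBound

lemma norm_sub_le_of_perturbed_recurrence {z : ℂ} {γ ρ ρ' e : ℕ → ℂ}
    (hρ : ∀ j : ℕ, 1 ≤ j →
      ρ (j + 1) = ρ (j - 1) - ((2 * (j : ℂ) + 2) / z) * ρ j + γ j)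
    (hρ' : ∀ j : ℕ, 1 ≤ j →
      ρ' (j + 1) = ρ' (j - 1) - ((2 * (j : ℂ) + 2) / z) * ρ' j + γ j + e (j + 1)) (m : ℕ) :
    ‖ρ (m + 2) - ρ' (m + 2)‖
      ≤ ‖ρ m - ρ' m‖ + (2 * m + 4) / ‖z‖ * ‖ρ (m + 1) - ρ' (m + 1)‖ + ‖e (m + 2)‖ := by
  have hdiff : ρ (m + 2) - ρ' (m + 2)
      = (ρ m - ρ' m) - (2 * m + 4) / z * (ρ (m + 1) - ρ' (m + 1)) - e (m + 2) := by
    have hexact : ρ (m + 2) = ρ m - (2 * ((m + 1 : ℕ) : ℂ) + 2) / z * ρ (m + 1) + γ (m + 1) :=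
      hρ (m + 1) le_add_self
    have hperturbed : ρ' (m + 2)
        = ρ' m - (2 * ((m + 1 : ℕ) : ℂ) + 2) / z * ρ' (m + 1) + γ (m + 1) + e (m + 2) :=
      hρ' (m + 1) le_add_self
    push_cast at hexact hperturbed
    linear_combination hexact - hperturbed
  have hcoeff : ‖(2 * m + 4 : ℂ) / z‖ = (2 * m + 4) / ‖z‖ := by
    rw [norm_div]
    congr 1
    exact_mod_cast Complex.norm_natCast (2 * m + 4)
  rw [hdiff, ← hcoeff]
  exact norm_sub_mul_sub_le _ _ _ _

theorem stmt_19_general (z : ℂ) (hz : 2 ≤ ‖z‖)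
    (ε : ℝ) (hε : 0 < ε)
    (γ : ℕ → ℂ)
    (ρ ρ' : ℕ → ℂ) (e : ℕ → ℂ)
    (hρ : ∀ j : ℕ, 1 ≤ j →
      ρ (j + 1) = ρ (j - 1) - ((2 * (j : ℂ) + 2) / z) * ρ j + γ j)
    (hρ' : ∀ j : ℕ, 1 ≤ j →
      ρ' (j + 1) = ρ' (j - 1) - ((2 * (j : ℂ) + 2) / z) * ρ' j + γ j + e (j + 1))
    (h0 : ‖ρ' 0 - ρ 0‖ ≤ ε)
    (h1 : ‖ρ' 1 - ρ 1‖ ≤ ε)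
    (he : ∀ j, ‖e j‖ ≤ ε) :
    ∀ n : ℕ, (n : ℝ) + 1 < ‖z‖ →
      ‖ρ n - ρ' n‖
        < Real.exp (4 * ((n : ℝ) + 1) ^ 2 / ‖z‖) * (((n + 1) / 2 : ℕ) + 1) * ε := by
  have hr : 0 < ‖z‖ := by linarith
  have hstep (m : ℕ) : ‖ρ (m + 2) - ρ' (m + 2)‖
      ≤ ‖ρ m - ρ' m‖ + (2 * m + 4) / ‖z‖ * ‖ρ (m + 1) - ρ' (m + 1)‖ + ε :=
    (norm_sub_le_of_perturbed_recurrence hρ hρ' m).trans (by gcongr; exact he _)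
  intro n _
  calc ‖ρ n - ρ' n‖ ≤ errorBound ‖z‖ ε n :=
        le_errorBound_of_recurrence hr hε.le (fun k => ‖ρ k - ρ' k‖)
          (by rwa [norm_sub_rev]) (by rwa [norm_sub_rev]) hstep n
    _ < _ := errorBound_lt hr hε n

theorem stmt_19 (z : ℂ) (hz : 2 ≤ ‖z‖) (hre : z.re ≤ 0)
    (ε : ℝ) (hε : 0 < ε)
    (γ : ℕ → ℂ)
    (hγ : ∀ j, γ j = if Even j then (Complex.exp (2 * z) - 1) / z
                     else (Complex.exp (2 * z) + 1) / z)
    (ρ ρ' : ℕ → ℂ) (e : ℕ → ℂ)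
    (hρ : ∀ j : ℕ, 1 ≤ j →
      ρ (j + 1) = ρ (j - 1) - ((2 * (j : ℂ) + 2) / z) * ρ j + γ j)
    (hρ' : ∀ j : ℕ, 1 ≤ j →
      ρ' (j + 1) = ρ' (j - 1) - ((2 * (j : ℂ) + 2) / z) * ρ' j + γ j + e (j + 1))
    (h0 : ‖ρ' 0 - ρ 0‖ ≤ ε)
    (h1 : ‖ρ' 1 - ρ 1‖ ≤ ε)
    (he : ∀ j, ‖e j‖ ≤ ε) :
    ∀ n : ℕ, (n : ℝ) + 1 < ‖z‖ →
      ‖ρ n - ρ' n‖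
        < Real.exp (4 * ((n : ℝ) + 1) ^ 2 / ‖z‖) * (((n + 1) / 2 : ℕ) + 1) * ε :=
  stmt_19_general z hz ε hε γ ρ ρ' e hρ hρ' h0 h1 he
end
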